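/- Let X be a reflexive Banach space with property (m_p), p > 1, and T a bounded operator on X. Define β(T) as the supremum of ‖x‖ over all weak cluster points of maximizing sequences for T. Then β(T) > 0 implies β(T) = 1, and β(T) = 1 if and only if T attains its norm. -/

import Mathlib

open Filter Topology

/-- Weak convergence of a sequence in a normed space. -/
def WeakTendsto {X : Type*} [NormedAddCommGroup X] [NormedSpace ℝ X]
    (x : ℕ → X) (x₀ : X) : Prop :=
  ∀ f : X →L[ℝ] ℝ, Tendsto (fun n => f (x n)) atTop (𝓝 (f x₀))

/-- Property (m_p). -/
def PropertyMp {X : Type*} [NormedAddCommGroup X] [NormedSpace ℝ X] (p : ℝ) : Prop :=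
  ∀ x : ℕ → X, WeakTendsto x 0 → ∀ y : X,
    limsup (fun n => ‖x n + y‖ ^ p) atTop = limsup (fun n => ‖x n‖ ^ p) atTop + ‖y‖ ^ p

/-- A maximizing sequence for a bounded operator: unit vectors with ‖T xₙ‖ → ‖T‖. -/
def MaximizingSeq {X : Type*} [NormedAddCommGroup X] [NormedSpace ℝ X]
    (T : X →L[ℝ] X) (x : ℕ → X) : Prop :=
  (∀ n, ‖x n‖ = 1) ∧ Tendsto (fun n => ‖T (x n)‖) atTop (𝓝 ‖T‖)

/-- Weak cluster point of some maximizing sequence for T. -/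
def WeakClusterPtOfMaximizing {X : Type*} [NormedAddCommGroup X] [NormedSpace ℝ X]
    (T : X →L[ℝ] X) (x₀ : X) : Prop :=
  ∃ x : ℕ → X, MaximizingSeq T x ∧ ∃ φ : ℕ → ℕ, StrictMono φ ∧ WeakTendsto (x ∘ φ) x₀

/-- The essential norm: distance to the compact operators. -/
noncomputable def essNorm {X : Type*} [NormedAddCommGroup X] [NormedSpace ℝ X]
    (T : X →L[ℝ] X) : ℝ :=
  sInf {c : ℝ | ∃ K : X →L[ℝ] X, IsCompactOperator K ∧ c = ‖T - K‖}

/-- Maximal weak maximizing limit. -/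
noncomputable def betaT {X : Type*} [NormedAddCommGroup X] [NormedSpace ℝ X]
    (T : X →L[ℝ] X) : ℝ :=
  sSup {r : ℝ | ∃ x₀ : X, WeakClusterPtOfMaximizing T x₀ ∧ r = ‖x₀‖}

/-!
Let `xₙ` be a maximizing sequence of unit vectors converging weakly to `x₀`, and put
`yₙ = xₙ - x₀`. Property (m_p) applied to `yₙ` and `x₀` gives `limsup ‖yₙ‖^p = 1 - ‖x₀‖^p`;
applied to `T yₙ` and `T x₀` it gives
`‖T‖^p = limsup ‖T yₙ‖^p + ‖T x₀‖^p ≤ ‖T‖^p (1 - ‖x₀‖^p) + ‖T x₀‖^p`.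
Hence `‖T x₀‖ = ‖T‖ ‖x₀‖`, so a nonzero weak cluster point, normalised, is a norming vector.
Conversely a norming vector is a weak cluster point of norm `1` (of the constant sequence),
and weak cluster points of unit vectors have norm at most `1`.
-/

section WeakTendsto

variable {X Y : Type*} [NormedAddCommGroup X] [NormedSpace ℝ X]
  [NormedAddCommGroup Y] [NormedSpace ℝ Y] {x : ℕ → X} {x₀ : X}

lemma WeakTendsto.sub_const (h : WeakTendsto x x₀) : WeakTendsto (fun n => x n - x₀) 0 := by
  intro f
  simpa using (h f).sub_const (f x₀)

lemma WeakTendsto.map (h : WeakTendsto x x₀) (T : X →L[ℝ] Y) :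
    WeakTendsto (fun n => T (x n)) (T x₀) :=
  fun f => h (f.comp T)

lemma WeakTendsto.norm_le {C : ℝ} (h : WeakTendsto x x₀) (hC : ∀ n, ‖x n‖ ≤ C) :
    ‖x₀‖ ≤ C := by
  obtain ⟨g, hg, hgx₀⟩ := exists_dual_vector'' ℝ x₀
  have hlim : Tendsto (fun n => g (x n)) atTop (𝓝 ‖x₀‖) := by simpa [hgx₀] using h g
  refine le_of_tendsto hlim (Eventually.of_forall fun n => ?_)
  calc g (x n) ≤ ‖g‖ * ‖x n‖ := (le_abs_self _).trans (g.le_opNorm _)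
    _ ≤ C := (mul_le_of_le_one_left (norm_nonneg _) hg).trans (hC n)

end WeakTendsto

lemma limsup_le_mul_limsup {ι : Type*} {f : Filter ι} [NeBot f] {u v : ι → ℝ} {c B : ℝ}
    (hc : 0 ≤ c) (hu : ∀ i, 0 ≤ u i) (hv : ∀ i, 0 ≤ v i) (hvB : ∀ i, v i ≤ B)
    (huv : ∀ i, u i ≤ c * v i) :
    limsup u f ≤ c * limsup v f := by
  have hmono : Monotone (c * ·) := fun _ _ h => mul_le_mul_of_nonneg_left h hc
  rw [hmono.map_limsup_of_continuousAt v (continuous_const_mul c).continuousAt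
    (isBoundedUnder_of ⟨B, hvB⟩) (isBoundedUnder_of ⟨0, hv⟩).isCoboundedUnder_le]
  exact limsup_le_limsup (Eventually.of_forall huv)
    (isBoundedUnder_of ⟨0, hu⟩).isCoboundedUnder_le
    (isBoundedUnder_of ⟨c * B, fun i => hmono (hvB i)⟩)

section Operator

variable {X : Type*} [NormedAddCommGroup X] [NormedSpace ℝ X] {T : X →L[ℝ] X}

def AttainsNorm (T : X →L[ℝ] X) : Prop := ∃ x : X, ‖x‖ = 1 ∧ ‖T x‖ = ‖T‖

lemma attainsNorm_of_opNorm_mul_le {x₀ : X} (h0 : x₀ ≠ 0) (h : ‖T‖ * ‖x₀‖ ≤ ‖T x₀‖) :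
    AttainsNorm T := by
  have hx₀ : ‖x₀‖ ≠ 0 := norm_ne_zero_iff.mpr h0
  have heq : ‖T x₀‖ = ‖T‖ * ‖x₀‖ := le_antisymm (T.le_opNorm x₀) h
  refine ⟨‖x₀‖⁻¹ • x₀, ?_, ?_⟩
  · rw [norm_smul, norm_inv, norm_norm, inv_mul_cancel₀ hx₀]
  · rw [map_smul, norm_smul, norm_inv, norm_norm, heq]
    field_simp

lemma MaximizingSeq.comp_strictMono {x : ℕ → X} (h : MaximizingSeq T x) {φ : ℕ → ℕ}
    (hφ : StrictMono φ) : MaximizingSeq T (x ∘ φ) :=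
  ⟨fun n => h.1 (φ n), h.2.comp hφ.tendsto_atTop⟩

lemma WeakClusterPtOfMaximizing.norm_le_one {x₀ : X} (h : WeakClusterPtOfMaximizing T x₀) :
    ‖x₀‖ ≤ 1 := by
  obtain ⟨x, hmax, φ, -, hw⟩ := h
  exact hw.norm_le fun n => (hmax.1 (φ n)).le

lemma AttainsNorm.exists_weakClusterPtOfMaximizing (h : AttainsNorm T) :
    ∃ x₀ : X, WeakClusterPtOfMaximizing T x₀ ∧ ‖x₀‖ = 1 := by
  obtain ⟨x, hx, hTx⟩ := h
  exact ⟨x, ⟨fun _ => x, ⟨fun _ => hx, hTx ▸ tendsto_const_nhds⟩, id, strictMono_id,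
    fun _ => tendsto_const_nhds⟩, hx⟩

variable {p : ℝ}

lemma PropertyMp.limsup_norm_sub_rpow (hmp : PropertyMp (X := X) p) {x : ℕ → X} {x₀ : X}
    (hx : ∀ n, ‖x n‖ = 1) (hw : WeakTendsto x x₀) :
    limsup (fun n => ‖x n - x₀‖ ^ p) atTop = 1 - ‖x₀‖ ^ p := by
  have h := hmp _ hw.sub_const x₀
  simp only [sub_add_cancel, hx, Real.one_rpow, limsup_const] at h
  linarith

lemma PropertyMp.opNorm_mul_le_of_weakTendsto (hp : 0 < p) (hmp : PropertyMp (X := X) p)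
    {x : ℕ → X} {x₀ : X} (hmax : MaximizingSeq T x) (hw : WeakTendsto x x₀) :
    ‖T‖ * ‖x₀‖ ≤ ‖T x₀‖ := by
  have hw' : WeakTendsto (fun n => T (x n - x₀)) 0 := map_zero T ▸ hw.sub_const.map T
  have hsplit := hmp _ hw' (T x₀)
  simp only [← map_add, sub_add_cancel] at hsplit
  rw [((hmax.2).rpow_const (Or.inr hp.le)).limsup_eq] at hsplit
  have hbound : ∀ n, ‖x n - x₀‖ ≤ 1 + ‖x₀‖ := fun n =>
    (norm_sub_le _ _).trans_eq (by rw [hmax.1 n])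
  have hlimsup : limsup (fun n => ‖T (x n - x₀)‖ ^ p) atTop ≤ ‖T‖ ^ p * (1 - ‖x₀‖ ^ p) := by
    rw [← hmp.limsup_norm_sub_rpow hmax.1 hw]
    refine limsup_le_mul_limsup (by positivity) (fun _ => by positivity) (fun _ => by positivity)
      (fun n => Real.rpow_le_rpow (norm_nonneg _) (hbound n) hp.le) fun n => ?_
    rw [← Real.mul_rpow (norm_nonneg _) (norm_nonneg _)]
    exact Real.rpow_le_rpow (norm_nonneg _) (T.le_opNorm _) hp.le
  have hpow : (‖T‖ * ‖x₀‖) ^ p ≤ ‖T x₀‖ ^ p := by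
    rw [Real.mul_rpow (norm_nonneg _) (norm_nonneg _)]
    linarith
  exact (Real.rpow_le_rpow_iff (by positivity) (norm_nonneg _) hp).mp hpow

lemma PropertyMp.attainsNorm_of_weakClusterPtOfMaximizing (hp : 0 < p)
    (hmp : PropertyMp (X := X) p) {x₀ : X} (h : WeakClusterPtOfMaximizing T x₀) (h0 : x₀ ≠ 0) :
    AttainsNorm T := by
  obtain ⟨x, hmax, φ, hφ, hw⟩ := h
  exact attainsNorm_of_opNorm_mul_le h0
    (hmp.opNorm_mul_le_of_weakTendsto hp (hmax.comp_strictMono hφ) hw)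

lemma betaT_le_one : betaT T ≤ 1 :=
  Real.sSup_le (by rintro _ ⟨x₀, hx₀, rfl⟩; exact hx₀.norm_le_one) zero_le_one

lemma AttainsNorm.betaT_eq_one (h : AttainsNorm T) : betaT T = 1 := by
  obtain ⟨x₀, hx₀, hnorm⟩ := h.exists_weakClusterPtOfMaximizing
  refine le_antisymm betaT_le_one (le_csSup ⟨1, ?_⟩ ⟨x₀, hx₀, hnorm.symm⟩)
  rintro _ ⟨y, hy, rfl⟩
  exact hy.norm_le_one

lemma PropertyMp.attainsNorm_of_betaT_pos (hp : 0 < p) (hmp : PropertyMp (X := X) p)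
    (hpos : 0 < betaT T) : AttainsNorm T := by
  by_contra hno
  refine hpos.not_ge (Real.sSup_le ?_ le_rfl)
  rintro _ ⟨x₀, hx₀, rfl⟩
  by_contra hx₀pos
  exact hno (hmp.attainsNorm_of_weakClusterPtOfMaximizing hp hx₀
    (norm_pos_iff.mp (not_le.mp hx₀pos)))

end Operator

theorem stmt4_general {X : Type*} [NormedAddCommGroup X] [NormedSpace ℝ X]
    {p : ℝ} (hp : 1 < p) (hmp : PropertyMp (X := X) p)
    (T : X →L[ℝ] X) :
    (betaT T > 0 → betaT T = 1) ∧
      (betaT T = 1 ↔ ∃ x : X, ‖x‖ = 1 ∧ ‖T x‖ = ‖T‖) := by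
  have hp0 : 0 < p := zero_lt_one.trans hp
  refine ⟨fun hpos => (hmp.attainsNorm_of_betaT_pos hp0 hpos).betaT_eq_one, fun h1 => ?_,
    AttainsNorm.betaT_eq_one⟩
  exact hmp.attainsNorm_of_betaT_pos hp0 (h1 ▸ zero_lt_one)

theorem stmt4 {X : Type*} [NormedAddCommGroup X] [NormedSpace ℝ X] [CompleteSpace X]
    (hrefl : Function.Surjective (NormedSpace.inclusionInDoubleDual ℝ X))
    {p : ℝ} (hp : 1 < p) (hmp : PropertyMp (X := X) p)
    (T : X →L[ℝ] X) :
    (betaT T > 0 → betaT T = 1) ∧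
      (betaT T = 1 ↔ ∃ x : X, ‖x‖ = 1 ∧ ‖T x‖ = ‖T‖) :=
  stmt4_general hp hmp T
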